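/- arXiv:1802.04126 — 3 statements merged into one kernel-verified Lean document; each statement's English description precedes it below -/
import Mathlib

section
/- For any positive integer k, the map (z₁,…,zₙ,w) ↦ (√k·z₁,…,√k·zₙ,wᵏ) is a proper map of the Fock-Bargmann-Hartogs domain D_{n,1}(μ) to itself, i.e., the preimage of any compact subset of D_{n,1}(μ) is compact. -/
/-!
`F` is the product of the homothety `z ↦ √k • z` and of `w ↦ wᵏ`, both proper on the whole space.
Since `(‖w‖²)ᵏ < exp(-μ‖z‖²)ᵏ` forces `‖w‖² < exp(-μ‖z‖²)`, the domain is the full preimage of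
itself under `F`, and restricting a proper map to the full preimage of a set keeps it proper.
-/

open Set

lemma IsProperMap.mapsToRestrict_of_preimage_subset {X Y : Type*} [TopologicalSpace X]
    [TopologicalSpace Y] {f : X → Y} (hf : IsProperMap f) {s : Set X} {t : Set Y}
    (hmaps : MapsTo f s t) (hpre : f ⁻¹' t ⊆ s) : IsProperMap (hmaps.restrict f s t) :=
  (hf.restrictPreimage t).comp
    (Homeomorph.setCongr (hmaps.subset_preimage.antisymm hpre)).isProperMap

lemma isProperMap_pow {R : Type*} [NormedRing R] [IsAbsoluteValue (norm : R → ℝ)] [ProperSpace R]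
    [Nontrivial R] {k : ℕ} (hk : k ≠ 0) : IsProperMap fun x : R => x ^ k := by
  have hdeg : 0 < (Polynomial.X ^ k : Polynomial R).degree := by
    rw [Polynomial.degree_X_pow]; exact_mod_cast Nat.pos_of_ne_zero hk
  simpa only [Polynomial.eval_X_pow] using Polynomial.isProperMap_eval _ hdeg

def fockBargmannHartogs (E : Type*) [NormedAddCommGroup E] (μ : ℝ) : Set (E × ℂ) :=
  {p | ‖p.2‖ ^ 2 < Real.exp (-μ * ‖p.1‖ ^ 2)}

lemma preimage_fockBargmannHartogs_subset {E : Type*} [NormedAddCommGroup E] [NormedSpace ℝ E]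
    (μ : ℝ) (k : ℕ) :
    Prod.map (Real.sqrt k • ·) (· ^ k) ⁻¹' fockBargmannHartogs E μ ⊆ fockBargmannHartogs E μ := by
  rintro ⟨z, w⟩ hzw
  have hz : ‖Real.sqrt k • z‖ ^ 2 = k * ‖z‖ ^ 2 := by
    rw [norm_smul, mul_pow, Real.norm_eq_abs, sq_abs, Real.sq_sqrt (Nat.cast_nonneg k)]
  have hexp : Real.exp (-μ * (k * ‖z‖ ^ 2)) = Real.exp (-μ * ‖z‖ ^ 2) ^ k := by
    rw [← Real.exp_nat_mul]; ring_nf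
  have hw : ‖w ^ k‖ ^ 2 = (‖w‖ ^ 2) ^ k := by rw [norm_pow, ← pow_mul, ← pow_mul, mul_comm]
  simp only [fockBargmannHartogs, mem_preimage, Prod.map, mem_ofPred_eq, hz, hexp, hw] at hzw ⊢
  exact lt_of_pow_lt_pow_left₀ k (Real.exp_nonneg _) hzw

theorem stmt1_general (n : ℕ) (μ : ℝ) (k : ℕ) (hk : 1 ≤ k)
    (D : Set (EuclideanSpace ℂ (Fin n) × ℂ))
    (hD : D = {p | ‖p.2‖ ^ 2 < Real.exp (-μ * ‖p.1‖ ^ 2)})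
    (F : EuclideanSpace ℂ (Fin n) × ℂ → EuclideanSpace ℂ (Fin n) × ℂ)
    (hF : F = fun p => ((Real.sqrt k : ℝ) • p.1, p.2 ^ k))
    (hmaps : Set.MapsTo F D D) :
    IsProperMap (Set.MapsTo.restrict F D D hmaps) := by
  subst hD hF
  have hsqrt : Real.sqrt k ≠ 0 := by positivity
  have hproper : IsProperMap (Prod.map (Real.sqrt k • ·) (· ^ k) :
      EuclideanSpace ℂ (Fin n) × ℂ → EuclideanSpace ℂ (Fin n) × ℂ) :=
    (Homeomorph.smulOfNeZero _ hsqrt).isProperMap.prodMap (isProperMap_pow (by omega))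
  exact hproper.mapsToRestrict_of_preimage_subset hmaps (preimage_fockBargmannHartogs_subset μ k)

/-- For any positive integer `k`, the map `(z,w) ↦ (√k·z, wᵏ)`, restricted to the
Fock-Bargmann-Hartogs domain `D_{n,1}(μ) = {(z,w) : |w|² < exp(-μ‖z‖²)}` (which it
maps into itself), is a proper map of `D_{n,1}(μ)` to itself. -/
theorem stmt1 (n : ℕ) (hn : 1 ≤ n) (μ : ℝ) (hμ : 0 < μ) (k : ℕ) (hk : 1 ≤ k)
    (D : Set (EuclideanSpace ℂ (Fin n) × ℂ))
    (hD : D = {p | ‖p.2‖ ^ 2 < Real.exp (-μ * ‖p.1‖ ^ 2)})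
    (F : EuclideanSpace ℂ (Fin n) × ℂ → EuclideanSpace ℂ (Fin n) × ℂ)
    (hF : F = fun p => ((Real.sqrt k : ℝ) • p.1, p.2 ^ k))
    (hmaps : Set.MapsTo F D D) :
    IsProperMap (Set.MapsTo.restrict F D D hmaps) :=
  stmt1_general n μ k hk D hD F hF hmaps
end

section
/- The group generated by the automorphisms φ_U, φ_{U'}, φ_v acts transitively on the boundary ∂D_{n,m}(μ) = {(z,w) : ‖w‖² = exp(-μ‖z‖²)}: for any two boundary points p, q there is a composition of such maps sending p to q. -/
/-! The translation `φ_v` with `v = q₁ - p₁` moves `p` to a boundary point over `q₁`, since its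
scalar factor has squared modulus
`exp (-μ (2 Re ⟪p₁, v⟫ + ‖v‖²)) = exp (-μ ‖p₁ + v‖²) / exp (-μ ‖p₁‖²)`.
Two boundary points over the same `q₁` have `w`-components of equal norm, and a unitary of `ℂᵐ`
maps one to the other (extend both normalised vectors to orthonormal bases); `U = 1`. -/

theorem OrthonormalBasis.exists_apply_eq_of_norm_eq_one {𝕜 E ι : Type*} [RCLike 𝕜]
    [NormedAddCommGroup E] [InnerProductSpace 𝕜 E] [FiniteDimensional 𝕜 E] [Fintype ι]
    (card_ι : Module.finrank 𝕜 E = Fintype.card ι) (i : ι) {e : E} (he : ‖e‖ = 1) :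
    ∃ b : OrthonormalBasis ι 𝕜 E, b i = e := by
  have horth : Orthonormal 𝕜 (({i} : Set ι).domRestrict fun _ ↦ e) :=
    ⟨fun _ ↦ he, fun j k hjk ↦ absurd (Subsingleton.elim j k) hjk⟩
  obtain ⟨b, hb⟩ := horth.exists_orthonormalBasis_extension_of_card_eq card_ι
  exact ⟨b, hb i rfl⟩

theorem LinearIsometryEquiv.exists_apply_eq_of_norm_eq {𝕜 E : Type*} [RCLike 𝕜]
    [NormedAddCommGroup E] [InnerProductSpace 𝕜 E] [FiniteDimensional 𝕜 E] {x y : E}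
    (h : ‖x‖ = ‖y‖) : ∃ f : E ≃ₗᵢ[𝕜] E, f x = y := by
  rcases eq_or_ne x 0 with rfl | hx
  · exact ⟨.refl 𝕜 E, (norm_eq_zero.mp (h ▸ norm_zero)).symm⟩
  have : Nontrivial E := ⟨⟨x, 0, hx⟩⟩
  set r : 𝕜 := ((‖x‖⁻¹ : ℝ) : 𝕜)
  have hr : r ≠ 0 := by simpa [r] using hx
  have hunit {z : E} (hz : ‖z‖ = ‖x‖) : ‖r • z‖ = 1 := by
    simp [r, norm_smul, hz, norm_ne_zero_iff.mpr hx]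
  let i₀ : Fin (Module.finrank 𝕜 E) := ⟨0, Module.finrank_pos⟩
  obtain ⟨b, hb⟩ := OrthonormalBasis.exists_apply_eq_of_norm_eq_one
    (Fintype.card_fin _).symm i₀ (hunit rfl)
  obtain ⟨c, hc⟩ := OrthonormalBasis.exists_apply_eq_of_norm_eq_one
    (Fintype.card_fin _).symm i₀ (hunit h.symm)
  refine ⟨b.equiv c (.refl _), smul_right_injective E hr ?_⟩
  simpa [hb, hc] using b.equiv_apply_basis c (.refl _) i₀

open Matrix in
theorem Matrix.exists_mem_unitaryGroup_mulVec_eq {𝕜 n : Type*} [RCLike 𝕜] [Fintype n]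
    [DecidableEq n] {x y : EuclideanSpace 𝕜 n} (h : ‖x‖ = ‖y‖) :
    ∃ U ∈ unitaryGroup n 𝕜, WithLp.toLp 2 (U *ᵥ x) = y := by
  obtain ⟨f, rfl⟩ := LinearIsometryEquiv.exists_apply_eq_of_norm_eq (𝕜 := 𝕜) h
  let u := Unitary.linearIsometryEquiv.symm f
  refine ⟨(toEuclideanCLM (n := n) (𝕜 := 𝕜)).symm u,
    Unitary.map_mem (toEuclideanCLM (n := n) (𝕜 := 𝕜)).symm u.2, ?_⟩
  rw [← ofLp_toEuclideanCLM, StarAlgEquiv.apply_symm_apply]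
  rfl

theorem norm_sq_exp_smul_of_norm_sq_eq_exp {E F : Type*} [NormedAddCommGroup E]
    [InnerProductSpace ℂ E] [NormedAddCommGroup F] [NormedSpace ℂ F] (μ : ℝ) {z : E} {w : F}
    (v : E) (hw : ‖w‖ ^ 2 = Real.exp (-μ * ‖z‖ ^ 2)) :
    ‖Complex.exp (-(μ : ℂ) * inner ℂ v z - (μ / 2 : ℂ) * (‖v‖ ^ 2 : ℝ)) • w‖ ^ 2 =
      Real.exp (-μ * ‖z + v‖ ^ 2) := by
  have hre : (-(μ : ℂ) * inner ℂ v z - (μ / 2 : ℂ) * (‖v‖ ^ 2 : ℝ)).re =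
      -μ * RCLike.re (inner ℂ z v) - μ / 2 * ‖v‖ ^ 2 := by
    rw [inner_re_symm (𝕜 := ℂ)]
    simp [-Complex.ofReal_pow]
  rw [norm_smul, mul_pow, hw, Complex.norm_exp, hre, ← Real.exp_nat_mul, ← Real.exp_add,
    norm_add_sq (𝕜 := ℂ)]
  ring_nf

theorem stmt4_general (n m : ℕ) (μ : ℝ)
    (bD : Set (EuclideanSpace ℂ (Fin n) × EuclideanSpace ℂ (Fin m)))
    (hbD : bD = {p | ‖p.2‖ ^ 2 = Real.exp (-μ * ‖p.1‖ ^ 2)}) :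
    ∀ p ∈ bD, ∀ q ∈ bD,
      ∃ (v : EuclideanSpace ℂ (Fin n)) (U : Matrix (Fin n) (Fin n) ℂ)
        (U' : Matrix (Fin m) (Fin m) ℂ),
        U ∈ Matrix.unitaryGroup (Fin n) ℂ ∧ U' ∈ Matrix.unitaryGroup (Fin m) ℂ ∧
        (fun r : EuclideanSpace ℂ (Fin n) × EuclideanSpace ℂ (Fin m) =>
            (r.1, (WithLp.toLp 2 (U'.mulVec r.2) : EuclideanSpace ℂ (Fin m))))
          ((fun r : EuclideanSpace ℂ (Fin n) × EuclideanSpace ℂ (Fin m) =>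
            ((WithLp.toLp 2 (U.mulVec r.1) : EuclideanSpace ℂ (Fin n)), r.2))
          ((fun r : EuclideanSpace ℂ (Fin n) × EuclideanSpace ℂ (Fin m) =>
            (r.1 + v, Complex.exp (-(μ : ℂ) * (inner ℂ v r.1 : ℂ)
              - (μ / 2 : ℂ) * (‖v‖ ^ 2 : ℝ)) • r.2)) p)) = q := by
  subst hbD
  rintro ⟨z, w⟩ hp ⟨z', w'⟩ hq
  have hz' : z + (z' - z) = z' := add_sub_cancel z z'
  have hnorm := norm_sq_exp_smul_of_norm_sq_eq_exp μ (z' - z) hp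
  rw [hz', ← hq, pow_left_inj₀ (norm_nonneg _) (norm_nonneg _) two_ne_zero] at hnorm
  obtain ⟨U', hU', hU'w⟩ := Matrix.exists_mem_unitaryGroup_mulVec_eq hnorm
  refine ⟨z' - z, 1, U', one_mem _, hU', ?_⟩
  simp only [Matrix.one_mulVec, hz', hU'w]

/-- The group generated by `φ_U`, `φ_{U'}`, `φ_v` acts transitively on the boundary
`∂D_{n,m}(μ) = {(z,w) : ‖w‖² = exp(-μ‖z‖²)}`: for any boundary points `p, q` there are
`v ∈ ℂⁿ`, `U ∈ U(n)`, `U' ∈ U(m)` with `(φ_{U'} ∘ φ_U ∘ φ_v)(p) = q`. -/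
theorem stmt4 (n m : ℕ) (hn : 1 ≤ n) (hm : 1 ≤ m) (μ : ℝ) (hμ : 0 < μ)
    (bD : Set (EuclideanSpace ℂ (Fin n) × EuclideanSpace ℂ (Fin m)))
    (hbD : bD = {p | ‖p.2‖ ^ 2 = Real.exp (-μ * ‖p.1‖ ^ 2)}) :
    ∀ p ∈ bD, ∀ q ∈ bD,
      ∃ (v : EuclideanSpace ℂ (Fin n)) (U : Matrix (Fin n) (Fin n) ℂ)
        (U' : Matrix (Fin m) (Fin m) ℂ),
        U ∈ Matrix.unitaryGroup (Fin n) ℂ ∧ U' ∈ Matrix.unitaryGroup (Fin m) ℂ ∧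
        (fun r : EuclideanSpace ℂ (Fin n) × EuclideanSpace ℂ (Fin m) =>
            (r.1, (WithLp.toLp 2 (U'.mulVec r.2) : EuclideanSpace ℂ (Fin m))))
          ((fun r : EuclideanSpace ℂ (Fin n) × EuclideanSpace ℂ (Fin m) =>
            ((WithLp.toLp 2 (U.mulVec r.1) : EuclideanSpace ℂ (Fin n)), r.2))
          ((fun r : EuclideanSpace ℂ (Fin n) × EuclideanSpace ℂ (Fin m) =>
            (r.1 + v, Complex.exp (-(μ : ℂ) * (inner ℂ v r.1 : ℂ)
              - (μ / 2 : ℂ) * (‖v‖ ^ 2 : ℝ)) • r.2)) p)) = q :=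
  stmt4_general n m μ bD hbD
end

section
/- Let U = (a_{ij})_{0≤i,j≤n+1} ∈ U(1,n+1) (i.e., U·diag(1,-1,…,-1)·conj(U)ᵀ = diag(1,-1,…,-1)). Suppose a_{j,n+1} = -a_{j0} for 1 ≤ j ≤ n. Then the n×n submatrix A = (a_{ij})_{1≤i,j≤n} is unitary. -/
/-!
For inner indices `j, k`, the `(j, k)` entry of `U J Uᴴ` is
`a_{j0} conj(a_{k0}) - (A Aᴴ)_{jk} - a_{j,n+1} conj(a_{k,n+1})`, and the hypothesis
`a_{j,n+1} = -a_{j0}` makes the first and last terms cancel. So `U J Uᴴ = J` restricted to the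
inner block reads `-(A Aᴴ) = -1`.
-/

open Matrix

abbrev Fin.succCastSucc {n : ℕ} (i : Fin n) : Fin (n + 2) := i.succ.castSucc

theorem Fin.succCastSucc_ne_zero {n : ℕ} (i : Fin n) : i.succCastSucc ≠ 0 :=
  Fin.castSucc_ne_zero_iff.mpr i.succ_ne_zero

theorem Fin.succCastSucc_injective {n : ℕ} : Function.Injective (@Fin.succCastSucc n) :=
  (Fin.castSucc_injective _).comp (Fin.succ_injective _)

theorem Fin.sum_univ_eq_zero_add_succCastSucc_add_last {M : Type*} [AddCommMonoid M] {n : ℕ}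
    (f : Fin (n + 2) → M) :
    ∑ b, f b = f 0 + ∑ i : Fin n, f i.succCastSucc + f (Fin.last (n + 1)) := by
  rw [Fin.sum_univ_castSucc, Fin.sum_univ_succ, Fin.castSucc_zero]

namespace Matrix

variable {R ι : Type*} {n : ℕ}

/-- The form `J = diag(1, -1, …, -1)`, so that `U(1, n + 1) = {U | U J Uᴴ = J}`. -/
def lorentzSignature (n : ℕ) (R : Type*) [Zero R] [One R] [Neg R] :
    Matrix (Fin (n + 2)) (Fin (n + 2)) R :=
  diagonal fun b => if b = 0 then 1 else -1

theorem mul_lorentzSignature_mul_conjTranspose_apply [Ring R] [Star R]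
    (U : Matrix ι (Fin (n + 2)) R) (i k : ι) :
    (U * lorentzSignature n R * Uᴴ) i k =
      U i 0 * star (U k 0) - ∑ m : Fin n, U i m.succCastSucc * star (U k m.succCastSucc)
        - U i (Fin.last (n + 1)) * star (U k (Fin.last (n + 1))) := by
  rw [lorentzSignature, mul_apply, Fin.sum_univ_eq_zero_add_succCastSucc_add_last]
  simp only [mul_diagonal, conjTranspose_apply, if_pos, Fin.succCastSucc_ne_zero,
    Fin.last_pos.ne', if_false, mul_one, mul_neg_one, neg_mul, Finset.sum_neg_distrib]
  abel

theorem submatrix_mul_lorentzSignature_mul_conjTranspose [Ring R] [StarRing R]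
    (U : Matrix (Fin (n + 2)) (Fin (n + 2)) R)
    (hU : ∀ j : Fin n, U j.succCastSucc (Fin.last (n + 1)) = -U j.succCastSucc 0) :
    (U * lorentzSignature n R * Uᴴ).submatrix Fin.succCastSucc Fin.succCastSucc =
      -(U.submatrix Fin.succCastSucc Fin.succCastSucc *
        (U.submatrix Fin.succCastSucc Fin.succCastSucc)ᴴ) := by
  ext j k
  rw [submatrix_apply, mul_lorentzSignature_mul_conjTranspose_apply, hU, hU]
  simp [mul_apply]

theorem submatrix_lorentzSignature [Ring R] :
    (lorentzSignature n R).submatrix Fin.succCastSucc Fin.succCastSucc = -1 := by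
  ext j k
  simp only [lorentzSignature, submatrix_apply, diagonal_apply, Fin.succCastSucc_injective.eq_iff,
    Fin.succCastSucc_ne_zero, if_false, neg_apply, one_apply]
  split_ifs <;> simp

end Matrix

/-- Let `U = (a_{ij})_{0≤i,j≤n+1} ∈ U(1,n+1)` and suppose `a_{j,n+1} = -a_{j0}` for
`1 ≤ j ≤ n`.  Then the middle `n×n` submatrix `A = (a_{ij})_{1≤i,j≤n}` is unitary. -/
theorem stmt7 (n : ℕ) (U : Matrix (Fin (n + 2)) (Fin (n + 2)) ℂ)
    (J : Matrix (Fin (n + 2)) (Fin (n + 2)) ℂ)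
    (hJ : J = Matrix.diagonal (fun i => if i = 0 then 1 else -1))
    (hU : U * J * U.conjTranspose = J)
    (hlast : ∀ j : Fin n, U j.succ.castSucc (Fin.last (n + 1)) = -U j.succ.castSucc 0)
    (A : Matrix (Fin n) (Fin n) ℂ)
    (hA : A = Matrix.of fun i j : Fin n => U i.succ.castSucc j.succ.castSucc) :
    A * A.conjTranspose = 1 := by
  have hUJ : U * lorentzSignature n ℂ * Uᴴ = lorentzSignature n ℂ := by
    subst hJ; exact hU
  have h := congrArg (·.submatrix Fin.succCastSucc Fin.succCastSucc) hUJ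
  simp only [submatrix_mul_lorentzSignature_mul_conjTranspose U hlast, submatrix_lorentzSignature,
    neg_inj] at h
  exact hA ▸ h
end
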